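/- Let A be a 2×2 complex matrix with A†A ≤ I₂ (i.e., I₂ − A†A is positive semidefinite), and let Ā = √(I₂ − A†A) be the positive semidefinite square root. Then |det A| + det Ā ≤ 1. -/

import Mathlib

open Matrix ComplexOrder

noncomputable section

/-- The positive semidefinite square root of a positive semidefinite matrix (as defined in the older Mathlib). -/
def Matrix.PosSemidef.sqrt {n 𝕜 : Type*} [Fintype n] [DecidableEq n] [RCLike 𝕜] {A : Matrix n n 𝕜}
    (hA : A.PosSemidef) : Matrix n n 𝕜 :=
  hA.1.eigenvectorUnitary.1 * diagonal ((↑) ∘ (√·) ∘ hA.1.eigenvalues) *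
    (star hA.1.eigenvectorUnitary : Matrix n n 𝕜)

lemma Matrix.PosSemidef.posSemidef_sqrt {n 𝕜 : Type*} [Fintype n] [DecidableEq n] [RCLike 𝕜]
    {A : Matrix n n 𝕜} (hA : A.PosSemidef) : hA.sqrt.PosSemidef := by
  have hD : (diagonal ((↑) ∘ (√·) ∘ hA.1.eigenvalues : n → 𝕜)).PosSemidef := by
    rw [posSemidef_diagonal_iff]
    intro i
    simp only [Function.comp_apply, RCLike.ofReal_nonneg]
    exact Real.sqrt_nonneg _
  have := hD.mul_mul_conjTranspose_same (hA.1.eigenvectorUnitary : Matrix n n 𝕜)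
  unfold Matrix.PosSemidef.sqrt
  simpa [star_eq_conjTranspose] using this

lemma Matrix.PosSemidef.sqrt_mul_self {n 𝕜 : Type*} [Fintype n] [DecidableEq n] [RCLike 𝕜]
    {A : Matrix n n 𝕜} (hA : A.PosSemidef) : hA.sqrt * hA.sqrt = A := by
  have hU : (star hA.1.eigenvectorUnitary : Matrix n n 𝕜) * hA.1.eigenvectorUnitary.1 = 1 :=
    Unitary.coe_star_mul_self _
  have hDD : diagonal ((↑) ∘ (√·) ∘ hA.1.eigenvalues : n → 𝕜) *
      diagonal ((↑) ∘ (√·) ∘ hA.1.eigenvalues : n → 𝕜) =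
      diagonal (RCLike.ofReal ∘ hA.1.eigenvalues) := by
    rw [diagonal_mul_diagonal]
    congr 1
    funext i
    simp only [Function.comp_apply]
    rw [← RCLike.ofReal_mul, Real.mul_self_sqrt (hA.eigenvalues_nonneg i)]
  unfold Matrix.PosSemidef.sqrt
  conv_rhs => rw [hA.1.spectral_theorem, Unitary.conjStarAlgAut_apply]
  calc _ = hA.1.eigenvectorUnitary.1 * diagonal ((↑) ∘ (√·) ∘ hA.1.eigenvalues : n → 𝕜) *
        ((star hA.1.eigenvectorUnitary : Matrix n n 𝕜) * hA.1.eigenvectorUnitary.1) *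
        diagonal ((↑) ∘ (√·) ∘ hA.1.eigenvalues : n → 𝕜) *
        (star hA.1.eigenvectorUnitary : Matrix n n 𝕜) := by simp only [Matrix.mul_assoc]
    _ = _ := by rw [hU, Matrix.mul_one, Matrix.mul_assoc _ (diagonal _) (diagonal _), hDD]

lemma psd_det_nonneg {M : Matrix (Fin 2) (Fin 2) ℂ} (hM : M.PosSemidef) :
    0 ≤ M.det := by
  rw [hM.1.det_eq_prod_eigenvalues]
  apply Finset.prod_nonneg
  intro i _
  have := hM.eigenvalues_nonneg i
  simp [Complex.le_def]; positivity

lemma det_one_sub_fin_two (M : Matrix (Fin 2) (Fin 2) ℂ) :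
    (1 - M).det = 1 - M.trace + M.det := by
  simp [Matrix.det_fin_two, Matrix.trace_fin_two, Matrix.sub_apply, Matrix.one_apply]
  ring

theorem det_add_det_bar_le_one (A : Matrix (Fin 2) (Fin 2) ℂ)
    (h : ((1 : Matrix (Fin 2) (Fin 2) ℂ) - Aᴴ * A).PosSemidef) :
    ‖A.det‖ + (h.sqrt.det).re ≤ 1 := by
  set x := ‖A.det‖ with hx
  have hx0 : 0 ≤ x := norm_nonneg _
  have hD : (0 : ℂ) ≤ h.sqrt.det := psd_det_nonneg h.posSemidef_sqrt
  set y := (h.sqrt.det).re with hy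
  have hy0 : 0 ≤ y := ((Complex.le_def).mp hD).1
  have hDim : (h.sqrt.det).im = 0 := ((Complex.le_def).mp hD).2.symm
  have hDc : h.sqrt.det = (y : ℂ) := by
    rw [Complex.ext_iff]; simp [hDim, hy]
  -- determinant of AᴴA is x²
  have hdetP : (Aᴴ * A).det = ((x^2 : ℝ) : ℂ) := by
    rw [Matrix.det_mul, Matrix.det_conjTranspose, hx, Complex.sq_norm,
      Complex.normSq_eq_conj_mul_self]
    rfl
  set t := ((Aᴴ * A).trace).re with ht
  -- y² = 1 - t + x²
  have hsq : (y : ℂ) * (y : ℂ) = 1 - (Aᴴ * A).trace + ((x^2 : ℝ) : ℂ) := by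
    rw [← hDc, ← Matrix.det_mul, h.sqrt_mul_self, ← hdetP,
      det_one_sub_fin_two]
  have hy2 : y * y = 1 - t + x^2 := by
    have := congrArg Complex.re hsq
    simpa [-Complex.ofReal_pow] using this
  -- t ≤ 2 : diagonal entries of the PSD matrix 1 - AᴴA are nonneg
  have hdiag : ∀ i, (0:ℂ) ≤ (1 - Aᴴ * A) i i := by
    intro i
    exact h.diag_nonneg
  have ht2 : t ≤ 2 := by
    have h0 := ((Complex.le_def).mp (hdiag 0)).1
    have h1 := ((Complex.le_def).mp (hdiag 1)).1
    simp [Matrix.sub_apply, Matrix.one_apply] at h0 h1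
    rw [ht, Matrix.trace_fin_two]
    simp only [Complex.add_re]
    linarith
  -- t ≥ 2x
  have htx : 2 * x ≤ t := by
    have habs : x ≤ ‖A 0 0‖ * ‖A 1 1‖
        + ‖A 0 1‖ * ‖A 1 0‖ := by
      rw [hx, Matrix.det_fin_two]
      calc ‖A 0 0 * A 1 1 - A 0 1 * A 1 0‖
          ≤ ‖A 0 0 * A 1 1‖ + ‖A 0 1 * A 1 0‖ :=
            norm_sub_le _ _
        _ = _ := by simp [norm_mul]
    have htr : t = ‖A 0 0‖^2 + ‖A 0 1‖^2
        + ‖A 1 0‖^2 + ‖A 1 1‖^2 := by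
      rw [ht, Matrix.trace_fin_two]
      simp [Matrix.mul_apply, Matrix.conjTranspose_apply, Fin.sum_univ_two,
        Complex.add_re, Complex.mul_re, Complex.sq_norm, Complex.normSq_apply]
      ring
    nlinarith [sq_nonneg (‖A 0 0‖ - ‖A 1 1‖),
      sq_nonneg (‖A 0 1‖ - ‖A 1 0‖)]
  -- finish
  nlinarith [sq_nonneg (1 - x), hy2, htx, ht2, mul_self_nonneg y]
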